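/- Let N be a sound deterministic negotiation over agent set A, and let B, C partition A. Let x1, x2 be reachable markings such that x1(p) = x2(p) for every p ∈ B, and every atom enabled at x1 or at x2 has at least one party in B and at least one party in C. Then x1(p) = x2(p) for every p ∈ C, i.e., x1 = x2. -/

import Mathlib

universe u v w

/-- A (distributed) negotiation over a finite set of agents, a type of atoms and a type
of result names.  `atoms` is the finite set of negotiation atoms, `n0`/`nf` the initial
and final atoms, `parties n` the parties of atom `n`, `results n` its finite set of
results, and `trans n p r` the set of atoms agent `p` is ready to engage in after the
outcome `(n, r)`. -/
structure Negotiation (Agent : Type u) (Atom : Type v) (Res : Type w)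
    [Fintype Agent] [DecidableEq Agent] [DecidableEq Atom] [DecidableEq Res] where
  atoms : Finset Atom
  n0 : Atom
  nf : Atom
  parties : Atom → Finset Agent
  results : Atom → Finset Res
  trans : Atom → Agent → Res → Finset Atom
  n0_mem : n0 ∈ atoms
  nf_mem : nf ∈ atoms
  parties_nonempty : ∀ n ∈ atoms, (parties n).Nonempty
  results_nonempty : ∀ n ∈ atoms, (results n).Nonempty
  parties_n0 : parties n0 = Finset.univ
  parties_nf : parties nf = Finset.univ
  trans_sub : ∀ n ∈ atoms, ∀ p ∈ parties n, ∀ r ∈ results n, trans n p r ⊆ atoms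
  trans_parties : ∀ n ∈ atoms, ∀ p ∈ parties n, ∀ r ∈ results n, ∀ n' ∈ trans n p r, p ∈ parties n'
  trans_empty_iff : ∀ n ∈ atoms, ∀ p ∈ parties n, ∀ r ∈ results n, (trans n p r = ∅ ↔ n = nf)
  on_path : ∀ n ∈ atoms,
    Relation.ReflTransGen (fun a b => ∃ p ∈ parties a, ∃ r ∈ results a, b ∈ trans a p r) n0 n ∧
    Relation.ReflTransGen (fun a b => ∃ p ∈ parties a, ∃ r ∈ results a, b ∈ trans a p r) n nf

namespace Negotiation

variable {Agent : Type u} {Atom : Type v} {Res : Type w}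
variable [Fintype Agent] [DecidableEq Agent] [DecidableEq Atom] [DecidableEq Res]

/-- A marking assigns to each agent the set of atoms it is ready to engage in. -/
def Marking (Agent : Type u) (Atom : Type v) : Type (max u v) := Agent → Finset Atom

/-- A marking enables an atom if every party of the atom is ready to engage in it. -/
def Enables (N : Negotiation Agent Atom Res) (x : Marking Agent Atom) (n : Atom) : Prop :=
  n ∈ N.atoms ∧ ∀ p ∈ N.parties n, n ∈ x p

/-- Small step: the occurrence of the outcome `o = (n, r)` from marking `x` yields `y`. -/
def StepTo (N : Negotiation Agent Atom Res) (x : Marking Agent Atom) (o : Atom × Res)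
    (y : Marking Agent Atom) : Prop :=
  N.Enables x o.1 ∧ o.2 ∈ N.results o.1 ∧
    ∀ p, y p = if p ∈ N.parties o.1 then N.trans o.1 p o.2 else x p

/-- Occurrence sequences: `Seq N x σ y` means the finite sequence of outcomes `σ`
can occur from marking `x` and leads to marking `y`. -/
inductive Seq (N : Negotiation Agent Atom Res) :
    Marking Agent Atom → List (Atom × Res) → Marking Agent Atom → Prop
  | nil (x : Marking Agent Atom) : Seq N x [] x
  | cons {x y z : Marking Agent Atom} {o : Atom × Res} {σ : List (Atom × Res)} :
      N.StepTo x o y → Seq N y σ z → Seq N x (o :: σ) z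

/-- The initial marking. -/
def x0 (N : Negotiation Agent Atom Res) : Marking Agent Atom := fun _ => {N.n0}

/-- The final marking. -/
def xf (_N : Negotiation Agent Atom Res) : Marking Agent Atom := fun _ => ∅

/-- A marking is reachable if some occurrence sequence leads to it from the initial marking. -/
def Reachable (N : Negotiation Agent Atom Res) (x : Marking Agent Atom) : Prop :=
  ∃ σ, N.Seq N.x0 σ x

/-- A large step is an occurrence sequence from the initial to the final marking. -/
def LargeStep (N : Negotiation Agent Atom Res) (σ : List (Atom × Res)) : Prop :=
  N.Seq N.x0 σ N.xf

/-- Soundness: every atom is enabled at some reachable marking, and from every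
reachable marking the final marking is reachable. -/
def Sound (N : Negotiation Agent Atom Res) : Prop :=
  (∀ n ∈ N.atoms, ∃ x, N.Reachable x ∧ N.Enables x n) ∧
  (∀ x, N.Reachable x → ∃ τ, N.Seq x τ N.xf)

/-- An agent is deterministic if it is never ready to engage in more than one atom. -/
def DeterministicAgent (N : Negotiation Agent Atom Res) (p : Agent) : Prop :=
  ∀ n ∈ N.atoms, n ≠ N.nf → p ∈ N.parties n → ∀ r ∈ N.results n, ∃ n', N.trans n p r = {n'}

/-- A negotiation is deterministic if all its agents are. -/
def Deterministic (N : Negotiation Agent Atom Res) : Prop := ∀ p, N.DeterministicAgent p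

/-- Weak determinism: for every `(n, p, r)` there is a deterministic agent which is a
party of every atom in `trans n p r`. -/
def WeaklyDeterministic (N : Negotiation Agent Atom Res) : Prop :=
  ∀ n ∈ N.atoms, ∀ p ∈ N.parties n, ∀ r ∈ N.results n,
    ∃ b, N.DeterministicAgent b ∧ ∀ n' ∈ N.trans n p r, b ∈ N.parties n'

/-- The edge relation of the graph of a negotiation. -/
def Edge (N : Negotiation Agent Atom Res) (a b : Atom) : Prop :=
  a ∈ N.atoms ∧ b ∈ N.atoms ∧ ∃ p ∈ N.parties a, ∃ r ∈ N.results a, b ∈ N.trans a p r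

/-- A negotiation is acyclic if its graph has no cycles. -/
def Acyclic (N : Negotiation Agent Atom Res) : Prop :=
  ∀ n, ¬ Relation.TransGen N.Edge n n

/-- The arc `(n, p, r, n')` occurs in the occurrence sequence `σ`. -/
def ArcOccursIn (N : Negotiation Agent Atom Res) (n : Atom) (p : Agent) (r : Res) (n' : Atom)
    (σ : List (Atom × Res)) : Prop :=
  ∃ (σ1 σ2 σ3 : List (Atom × Res)) (r' : Res), r' ∈ N.results n' ∧
    σ = σ1 ++ (n, r) :: σ2 ++ (n', r') :: σ3 ∧ ∀ o ∈ σ2, p ∉ N.parties o.1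

/-- The outcome `(n, r)` unconditionally enables the atom `n'`. -/
def UncondEnables (N : Negotiation Agent Atom Res) (n : Atom) (r : Res) (n' : Atom) : Prop :=
  N.parties n' ⊆ N.parties n ∧ ∀ p ∈ N.parties n', N.trans n p r = {n'}

/-- The outcome `(n, r)` has exclusive access to the atom `n'`. -/
def ExclusiveAccess (N : Negotiation Agent Atom Res) (n : Atom) (r : Res) (n' : Atom) : Prop :=
  ∀ p ∈ N.parties n', n' ∈ N.trans n p r ∧
    ∀ m ∈ N.atoms, ∀ r'' ∈ N.results m, (m, r'') ≠ (n, r) → n' ∉ N.trans m p r''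

/-- The outcome `(m, r'')` commits to the atom `n'`. -/
def CommitsTo (N : Negotiation Agent Atom Res) (m : Atom) (r'' : Res) (n' : Atom) : Prop :=
  ∃ p ∈ N.parties m, N.trans m p r'' = {n'}

/-- The merge rule: two results of a non-final atom with identical transition functions
are merged into a fresh result. -/
def MergeRule (N1 N2 : Negotiation Agent Atom Res) : Prop :=
  ∃ (n : Atom) (r1 r2 r : Res), n ∈ N1.atoms ∧ n ≠ N1.nf ∧
    r1 ∈ N1.results n ∧ r2 ∈ N1.results n ∧ r1 ≠ r2 ∧
    (∀ p ∈ N1.parties n, N1.trans n p r1 = N1.trans n p r2) ∧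
    r ∉ N1.results n ∧
    N2.atoms = N1.atoms ∧ N2.n0 = N1.n0 ∧ N2.nf = N1.nf ∧ N2.parties = N1.parties ∧
    N2.results n = insert r (((N1.results n).erase r1).erase r2) ∧
    (∀ m, m ≠ n → N2.results m = N1.results m) ∧
    (∀ p, N2.trans n p r = N1.trans n p r1) ∧
    (∀ p, ∀ r'' ∈ ((N1.results n).erase r1).erase r2, N2.trans n p r'' = N1.trans n p r'') ∧
    (∀ m, m ≠ n → N2.trans m = N1.trans m)

/-- The iteration rule: a result after which all parties return to the same atom is removed. -/
def IterationRule (N1 N2 : Negotiation Agent Atom Res) : Prop :=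
  ∃ (n : Atom) (r : Res), n ∈ N1.atoms ∧ r ∈ N1.results n ∧
    (∀ p ∈ N1.parties n, N1.trans n p r = {n}) ∧
    N2.atoms = N1.atoms ∧ N2.n0 = N1.n0 ∧ N2.nf = N1.nf ∧ N2.parties = N1.parties ∧
    N2.results n = (N1.results n).erase r ∧
    (∀ m, m ≠ n → N2.results m = N1.results m) ∧
    N2.trans = N1.trans

/-- The useless arc rule: under the guard consisting of three distinct arcs
`(n,p,r,n')`, `(n,p,r,n'')`, `(n,q,r,n')` with `trans n q r = {n'}`, the arc
`(n,p,r,n'')` is removed (and the result is again a negotiation, since `N2` is one). -/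
def UselessArcRule (N1 N2 : Negotiation Agent Atom Res) : Prop :=
  ∃ (n : Atom) (p q : Agent) (r : Res) (n' n'' : Atom),
    n ∈ N1.atoms ∧ p ∈ N1.parties n ∧ q ∈ N1.parties n ∧ r ∈ N1.results n ∧
    p ≠ q ∧ n' ≠ n'' ∧
    n' ∈ N1.trans n p r ∧ n'' ∈ N1.trans n p r ∧ N1.trans n q r = {n'} ∧
    N2.atoms = N1.atoms ∧ N2.n0 = N1.n0 ∧ N2.nf = N1.nf ∧
    N2.parties = N1.parties ∧ N2.results = N1.results ∧
    N2.trans n p r = (N1.trans n p r).erase n'' ∧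
    (∀ (m : Atom) (p' : Agent) (r' : Res), (m, p', r') ≠ (n, p, r) →
      N2.trans m p' r' = N1.trans m p' r')

/-- The shortcut rule applied to the outcome `(n, r)` which unconditionally enables `n'`,
using `f` to produce the fresh result names `r'_s = f r'`. -/
def ShortcutRuleAt (N1 N2 : Negotiation Agent Atom Res) (n : Atom) (r : Res) (n' : Atom)
    (f : Res → Res) : Prop :=
  n ∈ N1.atoms ∧ n' ∈ N1.atoms ∧ r ∈ N1.results n ∧ n' ≠ n ∧
  N1.UncondEnables n r n' ∧
  ((n' ≠ N1.nf ∧ N1.ExclusiveAccess n r n') ∨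
   (n' ≠ N1.nf ∧ ∃ (m : Atom) (r'' : Res), m ∈ N1.atoms ∧ r'' ∈ N1.results m ∧
      (m, r'') ≠ (n, r) ∧ N1.CommitsTo m r'' n') ∨
   (n' = N1.nf ∧ N1.ExclusiveAccess n r n' ∧ N1.results n = {r})) ∧
  Set.InjOn f ↑(N1.results n') ∧ (∀ r' ∈ N1.results n', f r' ∉ N1.results n) ∧
  N2.n0 = N1.n0 ∧ N2.parties = N1.parties ∧
  N2.results n = ((N1.results n).erase r) ∪ (N1.results n').image f ∧
  (∀ m, m ≠ n → N2.results m = N1.results m) ∧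
  (∀ r' ∈ N1.results n', ∀ p ∈ N1.parties n', N2.trans n p (f r') = N1.trans n' p r') ∧
  (∀ r' ∈ N1.results n', ∀ p ∈ N1.parties n, p ∉ N1.parties n' →
      N2.trans n p (f r') = N1.trans n p r) ∧
  (∀ r'' ∈ (N1.results n).erase r, ∀ p, N2.trans n p r'' = N1.trans n p r'') ∧
  (∀ m, m ≠ n → N2.trans m = N1.trans m) ∧
  (N1.ExclusiveAccess n r n' → N2.atoms = N1.atoms.erase n') ∧
  (¬ N1.ExclusiveAccess n r n' → N2.atoms = N1.atoms) ∧
  ((n' = N1.nf ∧ N1.ExclusiveAccess n r n') → N2.nf = n) ∧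
  (¬ (n' = N1.nf ∧ N1.ExclusiveAccess n r n') → N2.nf = N1.nf)

/-- The shortcut rule as a relation between negotiations. -/
def ShortcutRule (N1 N2 : Negotiation Agent Atom Res) : Prop :=
  ∃ n r n' f, ShortcutRuleAt N1 N2 n r n' f

/-- The deterministic shortcut rule: the shortcut rule restricted to the case where the
unconditionally enabled atom has at most one result. -/
def DShortcutRule (N1 N2 : Negotiation Agent Atom Res) : Prop :=
  ∃ n r n' f, ShortcutRuleAt N1 N2 n r n' f ∧ (N1.results n').card ≤ 1

/-- A negotiation is irreducible if none of the four reduction rules is applicable. -/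
def Irreducible (N : Negotiation Agent Atom Res) : Prop :=
  ∀ N' : Negotiation Agent Atom Res,
    ¬ (MergeRule N N' ∨ IterationRule N N' ∨ UselessArcRule N N' ∨ ShortcutRule N N')

/-- The marking `x_n` that puts exactly the parties of `n` on `n`. -/
def xAt (N : Negotiation Agent Atom Res) (n : Atom) : Marking Agent Atom :=
  fun p => if p ∈ N.parties n then {n} else ∅

/-- An `(n, r)`-sequence: a finite occurrence sequence from `x_n` starting with the
outcome `(n, r)` all of whose atoms have their parties included in the parties of `n`. -/
def NRSeq (N : Negotiation Agent Atom Res) (n : Atom) (r : Res)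
    (σ : List (Atom × Res)) : Prop :=
  (∃ τ, σ = (n, r) :: τ) ∧ (∃ y, N.Seq (N.xAt n) σ y) ∧
    ∀ o ∈ σ, N.parties o.1 ⊆ N.parties n

/-- The index of the outcome `(n, r)`: the length of a longest (maximal) `(n,r)`-sequence
minus one. -/
noncomputable def outcomeIndex (N : Negotiation Agent Atom Res) (n : Atom) (r : Res) : ℕ :=
  sSup {l : ℕ | ∃ σ, N.NRSeq n r σ ∧ σ.length = l} - 1

/-- The index of a negotiation: the sum of the indices of all non-final outcomes. -/
noncomputable def negIndex (N : Negotiation Agent Atom Res) : ℕ :=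
  (N.atoms.filter (fun n => n ≠ N.nf)).sum
    (fun n => (N.results n).sum (fun r => N.outcomeIndex n r))

/-- An `n`-sequence: an `(n, r)`-sequence for some result `r` of `n`. -/
def NSeq (N : Negotiation Agent Atom Res) (n : Atom) (σ : List (Atom × Res)) : Prop :=
  (∃ r ∈ N.results n, ∃ τ, σ = (n, r) :: τ) ∧ (∃ y, N.Seq (N.xAt n) σ y) ∧
    ∀ o ∈ σ, N.parties o.1 ⊆ N.parties n

/-- A maximal `n`-sequence: it cannot be extended to a longer `n`-sequence. -/
def MaximalNSeq (N : Negotiation Agent Atom Res) (n : Atom) (σ : List (Atom × Res)) : Prop :=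
  N.NSeq n σ ∧ ∀ o : Atom × Res, ¬ N.NSeq n (σ ++ [o])

/-- An outcome `(n, r)` is uniform: all parties of `n` move to the same set of atoms. -/
def Uniform (N : Negotiation Agent Atom Res) (n : Atom) (r : Res) : Prop :=
  ∀ p ∈ N.parties n, ∀ q ∈ N.parties n, N.trans n p r = N.trans n q r

/-- A replication: all atoms have the same parties and all outcomes are uniform. -/
def Replication (N : Negotiation Agent Atom Res) : Prop :=
  (∀ n ∈ N.atoms, ∀ m ∈ N.atoms, N.parties n = N.parties m) ∧
  (∀ n ∈ N.atoms, ∀ r ∈ N.results n, N.Uniform n r)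

/-- A path of a negotiation: a list of triples `(nᵢ, pᵢ, rᵢ)` with `nᵢ₊₁ ∈ trans nᵢ pᵢ rᵢ`. -/
def IsPath (N : Negotiation Agent Atom Res) (π : List (Atom × Agent × Res)) : Prop :=
  (∀ t ∈ π, t.1 ∈ N.atoms ∧ t.2.1 ∈ N.parties t.1 ∧ t.2.2 ∈ N.results t.1) ∧
  π.Chain' (fun s t => t.1 ∈ N.trans s.1 s.2.1 s.2.2)

/-- A loop: a nonempty sequence of outcomes leading from some reachable marking back to itself. -/
def IsLoop (N : Negotiation Agent Atom Res) (σ : List (Atom × Res)) : Prop :=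
  σ ≠ [] ∧ ∃ x, N.Reachable x ∧ N.Seq x σ x

end Negotiation

namespace Negotiation
variable {Agent : Type u} {Atom : Type v} {Res : Type w}
variable [Fintype Agent] [DecidableEq Agent] [DecidableEq Atom] [DecidableEq Res]

/-!
Say that `x` is anchored at `w` if every atom enabled at `x` has a party whose state in `w` is
the same. Let `x`, `w` be reachable with `w` anchored at `x`, and cut a run from `x` to the final
marking at its first atom `e` enabled at `w`. By determinism the anchoring parties are frozen
until then, so firing `e` on both sides keeps `w` anchored at `x`; by induction, `w` terminates
at least as fast as `x`. If `x` is also anchored at `w`, either the cut is at the first step, and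
then the markings agree on the parties of `e` and, by induction, everywhere else; or `w`
terminates strictly faster, and we exchange `x` and `w`. In the theorem, `x1` and `x2` are
anchored at each other through their agents in `B`.
-/

variable {N : Negotiation Agent Atom Res} {x y z w : Marking Agent Atom} {o : Atom × Res}
  {σ : List (Atom × Res)}

theorem _root_.List.exists_split_at_first {α : Type*} {P : α → Prop} {l : List α}
    (h : ∃ a ∈ l, P a) : ∃ s a t, l = s ++ a :: t ∧ P a ∧ ∀ b ∈ s, ¬ P b := by
  classical
  have hfind : (l.find? fun a => decide (P a)).isSome := List.find?_isSome.mpr (by simpa using h)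
  obtain ⟨a, ha⟩ := Option.isSome_iff_exists.mp hfind
  obtain ⟨hPa, s, t, rfl, hs⟩ := List.find?_eq_some_iff_append.mp ha
  exact ⟨s, a, t, rfl, by simpa using hPa, fun b hb => by simpa using hs b hb⟩

def fire (N : Negotiation Agent Atom Res) (x : Marking Agent Atom) (o : Atom × Res) :
    Marking Agent Atom :=
  fun p => if p ∈ N.parties o.1 then N.trans o.1 p o.2 else x p

theorem fire_apply_of_mem {p : Agent} (hp : p ∈ N.parties o.1) :
    N.fire x o p = N.trans o.1 p o.2 := if_pos hp

theorem fire_apply_of_notMem {p : Agent} (hp : p ∉ N.parties o.1) : N.fire x o p = x p :=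
  if_neg hp

theorem stepTo_iff :
    N.StepTo x o y ↔ N.Enables x o.1 ∧ o.2 ∈ N.results o.1 ∧ y = N.fire x o := by
  unfold StepTo
  exact and_congr_right' <| and_congr_right' ⟨fun h => funext h, fun h p => by rw [h]; rfl⟩

theorem StepTo.eq_fire (h : N.StepTo x o y) : y = N.fire x o :=
  (stepTo_iff.mp h).2.2

theorem Enables.stepTo_fire {e : Atom} {r : Res} (he : N.Enables x e) (hr : r ∈ N.results e) :
    N.StepTo x (e, r) (N.fire x (e, r)) :=
  stepTo_iff.mpr ⟨he, hr, rfl⟩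

theorem Seq.nil_iff : N.Seq x [] y ↔ x = y :=
  ⟨by rintro ⟨⟩; rfl, by rintro rfl; exact .nil x⟩

theorem Seq.cons_iff : N.Seq x (o :: σ) z ↔ ∃ y, N.StepTo x o y ∧ N.Seq y σ z :=
  ⟨by rintro (_ | ⟨hst, hσ⟩); exact ⟨_, hst, hσ⟩, fun ⟨_, hst, hσ⟩ => .cons hst hσ⟩

theorem Seq.append_iff {σ₁ σ₂ : List (Atom × Res)} :
    N.Seq x (σ₁ ++ σ₂) z ↔ ∃ y, N.Seq x σ₁ y ∧ N.Seq y σ₂ z := by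
  induction σ₁ generalizing x with
  | nil => simp [Seq.nil_iff]
  | cons o σ₁ ih => simp only [List.cons_append, Seq.cons_iff, ih]; aesop

theorem Reachable.of_seq (hx : N.Reachable x) (h : N.Seq x σ y) : N.Reachable y :=
  let ⟨σ₀, h₀⟩ := hx
  ⟨σ₀ ++ σ, Seq.append_iff.mpr ⟨x, h₀, h⟩⟩

theorem Reachable.of_stepTo (hx : N.Reachable x) (h : N.StepTo x o y) : N.Reachable y :=
  hx.of_seq (.cons h (.nil y))

theorem StepTo.card_le_one (hd : N.Deterministic) (h : N.StepTo x o y)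
    (hx : ∀ p, (x p).card ≤ 1) (p : Agent) : (y p).card ≤ 1 := by
  obtain ⟨he, hr, rfl⟩ := stepTo_iff.mp h
  by_cases hp : p ∈ N.parties o.1
  · rw [fire_apply_of_mem hp]
    by_cases hnf : o.1 = N.nf
    · simp [(N.trans_empty_iff o.1 he.1 p hp o.2 hr).mpr hnf]
    · obtain ⟨n', hn'⟩ := hd p o.1 he.1 hnf hp o.2 hr
      simp [hn']
  · rw [fire_apply_of_notMem hp]
    exact hx p

theorem Seq.card_le_one (hd : N.Deterministic) (h : N.Seq x σ y)
    (hx : ∀ p, (x p).card ≤ 1) (p : Agent) : (y p).card ≤ 1 := by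
  induction h with
  | nil => exact hx p
  | cons hst _ ih => exact ih (hst.card_le_one hd hx)

theorem Reachable.eq_singleton_of_enables (hd : N.Deterministic) (hx : N.Reachable x)
    {e : Atom} (he : N.Enables x e) {p : Agent} (hp : p ∈ N.parties e) : x p = {e} := by
  obtain ⟨σ, hσ⟩ := hx
  have hcard := hσ.card_le_one hd (fun _ => by simp [x0]) p
  exact Finset.eq_singleton_iff_unique_mem.mpr
    ⟨he.2 p hp, fun a ha => Finset.card_le_one.mp hcard a ha e (he.2 p hp)⟩

theorem Sound.exists_enables (hs : N.Sound) (hx : N.Reachable x) (hxf : x ≠ N.xf) :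
    ∃ e, N.Enables x e := by
  obtain ⟨τ, hτ⟩ := hs.2 x hx
  cases hτ with
  | nil => exact absurd rfl hxf
  | cons hst _ => exact ⟨_, hst.1⟩

theorem Seq.apply_eq_singleton {e : Atom} (h : N.Seq x σ y) (hσ : ∀ o ∈ σ, o.1 ≠ e)
    {p : Agent} (hp : x p = {e}) : y p = {e} := by
  induction h with
  | nil => exact hp
  | @cons x y z o σ hst _ ih =>
    have hpo : p ∉ N.parties o.1 := fun hmem => by
      have := hst.1.2 p hmem
      rw [hp, Finset.mem_singleton] at this
      exact hσ o List.mem_cons_self this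
    refine ih (fun o' ho' => hσ o' (List.mem_cons_of_mem _ ho')) ?_
    rw [hst.eq_fire, fire_apply_of_notMem hpo, hp]

theorem Seq.exists_mem_of_apply_eq_singleton {e : Atom} (h : N.Seq x σ N.xf) {p : Agent}
    (hp : x p = {e}) : ∃ o ∈ σ, o.1 = e := by
  by_contra! hσ
  simpa [xf] using h.apply_eq_singleton hσ hp

def Anchored (N : Negotiation Agent Atom Res) (x w : Marking Agent Atom) : Prop :=
  ∀ e, N.Enables x e → ∃ q ∈ N.parties e, x q = w q

theorem Anchored.fire (h : N.Anchored x w) (o : Atom × Res) :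
    N.Anchored (N.fire x o) (N.fire w o) := by
  intro e he
  by_cases hmeet : ∃ q ∈ N.parties e, q ∈ N.parties o.1
  · obtain ⟨q, hq, hqo⟩ := hmeet
    exact ⟨q, hq, by rw [fire_apply_of_mem hqo, fire_apply_of_mem hqo]⟩
  · push Not at hmeet
    have hex : N.Enables x e := ⟨he.1, fun p hp => by
      simpa [fire_apply_of_notMem (hmeet p hp)] using he.2 p hp⟩
    obtain ⟨q, hq, hxw⟩ := h e hex
    have hqo := hmeet q hq
    exact ⟨q, hq, by rw [fire_apply_of_notMem hqo, fire_apply_of_notMem hqo, hxw]⟩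

theorem Anchored.of_seq (hd : N.Deterministic) (hw : N.Reachable w) (h : N.Anchored w x)
    (hσ : N.Seq x σ z) (hσw : ∀ o ∈ σ, ¬ N.Enables w o.1) : N.Anchored w z := by
  intro e he
  obtain ⟨q, hq, hwx⟩ := h e he
  have hwq := hw.eq_singleton_of_enables hd he hq
  refine ⟨q, hq, ?_⟩
  rw [hwq, hσ.apply_eq_singleton (fun o ho hoe => hσw o ho (hoe ▸ he)) (hwx ▸ hwq)]

theorem exists_split_at_first_enabled (hs : N.Sound) (hd : N.Deterministic)
    (hw : N.Reachable w) (hwf : w ≠ N.xf) (h : N.Anchored w x) (hσ : N.Seq x σ N.xf) :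
    ∃ π e r ρ z, σ = π ++ (e, r) :: ρ ∧ N.Seq x π z ∧ N.Enables w e ∧
      N.StepTo z (e, r) (N.fire z (e, r)) ∧ N.Seq (N.fire z (e, r)) ρ N.xf ∧
      N.Anchored (N.fire w (e, r)) (N.fire z (e, r)) := by
  -- Some party of an atom enabled at `w` waits for it in `x` too, so the run must fire it.
  obtain ⟨e₀, he₀⟩ := hs.exists_enables hw hwf
  obtain ⟨q, hq, hwx⟩ := h e₀ he₀
  obtain ⟨o₀, ho₀, rfl⟩ := hσ.exists_mem_of_apply_eq_singleton
    (hwx ▸ hw.eq_singleton_of_enables hd he₀ hq)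
  obtain ⟨π, ⟨e, r⟩, ρ, rfl, he, hπ⟩ :=
    List.exists_split_at_first (P := fun o => N.Enables w o.1) ⟨o₀, ho₀, he₀⟩
  obtain ⟨z, hxz, hzf⟩ := Seq.append_iff.mp hσ
  obtain ⟨z', hst, hρ⟩ := Seq.cons_iff.mp hzf
  obtain rfl := hst.eq_fire
  exact ⟨π, e, r, ρ, z, rfl, hxz, he, hst, hρ, (h.of_seq hd hw hxz hπ).fire _⟩

theorem exists_seq_xf_length_le (hs : N.Sound) (hd : N.Deterministic) (hx : N.Reachable x)
    (hw : N.Reachable w) (h : N.Anchored w x) (hσ : N.Seq x σ N.xf) :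
    ∃ τ, N.Seq w τ N.xf ∧ τ.length ≤ σ.length := by
  induction hn : σ.length using Nat.strong_induction_on generalizing x w σ with
  | _ n ih =>
  by_cases hwf : w = N.xf
  · exact ⟨[], hwf ▸ .nil w, by simp⟩
  obtain ⟨π, e, r, ρ, z, rfl, hxz, he, hst, hρ, hanc⟩ :=
    exists_split_at_first_enabled hs hd hw hwf h hσ
  obtain ⟨τ, hτ, hlen⟩ := ih ρ.length (by simp [← hn]; omega)
    ((hx.of_seq hxz).of_stepTo hst) (hw.of_stepTo (he.stepTo_fire hst.2.1)) hanc hρ rfl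
  exact ⟨(e, r) :: τ, .cons (he.stepTo_fire hst.2.1) hτ, by simp [← hn]; omega⟩

theorem eq_of_anchored (hs : N.Sound) (hd : N.Deterministic) (hx : N.Reachable x)
    (hw : N.Reachable w) (hxw : N.Anchored x w) (hwx : N.Anchored w x)
    (hσ : N.Seq x σ N.xf) : x = w := by
  induction hn : σ.length using Nat.strong_induction_on generalizing x w σ with
  | _ n ih =>
  by_cases hwf : w = N.xf
  · subst hwf
    by_contra hxf
    obtain ⟨e, he⟩ := hs.exists_enables hx hxf
    obtain ⟨q, hq, hxq⟩ := hxw e he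
    simpa [hxq, xf] using he.2 q hq
  obtain ⟨π, e, r, ρ, z, rfl, hxz, he, hst, hρ, hanc⟩ :=
    exists_split_at_first_enabled hs hd hw hwf hwx hσ
  have hz₁ : N.Reachable (N.fire z (e, r)) := (hx.of_seq hxz).of_stepTo hst
  have hw₁ : N.Reachable (N.fire w (e, r)) := hw.of_stepTo (he.stepTo_fire hst.2.1)
  cases π with
  | nil =>
    obtain rfl := Seq.nil_iff.mp hxz
    have hfire := ih ρ.length (by simp [← hn]) hz₁ hw₁ (hxw.fire _) hanc hρ rfl
    funext p
    by_cases hp : p ∈ N.parties e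
    · rw [hx.eq_singleton_of_enables hd hst.1 hp, hw.eq_singleton_of_enables hd he hp]
    · simpa only [fire_apply_of_notMem (o := (e, r)) hp] using congrFun hfire p
  | cons o π =>
    -- The cut comes after the first step, so `w` terminates strictly faster than `x`.
    obtain ⟨τ, hτ, hlen⟩ := exists_seq_xf_length_le hs hd hz₁ hw₁ hanc hρ
    exact (ih ((e, r) :: τ).length (by simp [← hn]; omega) hw hx hwx hxw
      (.cons (he.stepTo_fire hst.2.1) hτ) rfl).symm

theorem statement18_general (N : Negotiation Agent Atom Res) (hs : N.Sound) (hd : N.Deterministic)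
    (B C : Finset Agent)
    (x1 x2 : Marking Agent Atom) (h1 : N.Reachable x1) (h2 : N.Reachable x2)
    (hB : ∀ p ∈ B, x1 p = x2 p)
    (hen : ∀ n : Atom, N.Enables x1 n ∨ N.Enables x2 n →
      (∃ p ∈ B, p ∈ N.parties n) ∧ ∃ p ∈ C, p ∈ N.parties n) :
    (∀ p ∈ C, x1 p = x2 p) ∧ x1 = x2 := by
  have h12 : N.Anchored x1 x2 := fun e he =>
    let ⟨⟨b, hb, hbe⟩, _⟩ := hen e (.inl he)
    ⟨b, hbe, hB b hb⟩
  have h21 : N.Anchored x2 x1 := fun e he =>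
    let ⟨⟨b, hb, hbe⟩, _⟩ := hen e (.inr he)
    ⟨b, hbe, (hB b hb).symm⟩
  obtain ⟨σ, hσ⟩ := hs.2 x1 h1
  have hx : x1 = x2 := eq_of_anchored hs hd h1 h2 h12 h21 hσ
  exact ⟨fun p _ => congrFun hx p, hx⟩

/-- If `B, C` partition the agents, `x1, x2` are reachable markings agreeing on `B`, and
every atom enabled at `x1` or `x2` has a party in `B` and a party in `C`, then `x1` and
`x2` agree on `C` as well, i.e. they are equal. -/
theorem statement18 (N : Negotiation Agent Atom Res) (hs : N.Sound) (hd : N.Deterministic)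
    (B C : Finset Agent) (hBC : B ∪ C = Finset.univ) (hdisj : Disjoint B C)
    (x1 x2 : Marking Agent Atom) (h1 : N.Reachable x1) (h2 : N.Reachable x2)
    (hB : ∀ p ∈ B, x1 p = x2 p)
    (hen : ∀ n : Atom, N.Enables x1 n ∨ N.Enables x2 n →
      (∃ p ∈ B, p ∈ N.parties n) ∧ ∃ p ∈ C, p ∈ N.parties n) :
    (∀ p ∈ C, x1 p = x2 p) ∧ x1 = x2 :=
  statement18_general N hs hd B C x1 x2 h1 h2 hB hen

end Negotiation
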